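/- arXiv:2405.16786 — 5 statements merged into one kernel-verified Lean document; each statement's English description precedes it below -/
import Mathlib

section
/- Define the sequence b_n by the recursion b_0 = b_1 = 1 and b_{2n-1} = b_{2n} = Σ_{k=0}^{n-1} binom(n-1,k) · 2^{n-1-k} · b_k for n ≥ 1. Then b_{n+2} ≤ 4·b_n for all n ≥ 0. -/
/-- Pascal's rule for sums against binomial coefficients. -/
lemma pascal_sum (g : ℕ → ℕ) (N : ℕ) :
    ∑ k ∈ Finset.range (N + 2), (N + 1).choose k * g k
      = (∑ k ∈ Finset.range (N + 1), N.choose k * g k)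
        + ∑ k ∈ Finset.range (N + 1), N.choose k * g (k + 1) := by
  rw [Finset.sum_range_succ' (fun k => (N + 1).choose k * g k) (N + 1)]
  have h1 : ∀ k ∈ Finset.range (N + 1), (N + 1).choose (k + 1) * g (k + 1)
      = N.choose k * g (k + 1) + N.choose (k + 1) * g (k + 1) := by
    intro k _; rw [Nat.choose_succ_succ, add_mul]
  rw [Finset.sum_congr rfl h1, Finset.sum_add_distrib]
  have h2 : (∑ k ∈ Finset.range (N + 1), N.choose (k + 1) * g (k + 1))
      + (N + 1).choose 0 * g 0 = ∑ k ∈ Finset.range (N + 1), N.choose k * g k := by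
    have h3 := Finset.sum_range_succ' (fun k => N.choose k * g k) (N + 1)
    rw [Finset.sum_range_succ (fun k => N.choose k * g k) (N + 1)] at h3
    simp only [Nat.choose_succ_self, zero_mul, add_zero, Nat.choose_zero_right, one_mul] at h3 ⊢
    omega
  omega

/-- If `b 0 = b 1 = 1` and `b (2n-1) = b (2n) = ∑_{k=0}^{n-1} C(n-1,k) 2^{n-1-k} b k`
for `n ≥ 1`, then `b (n+2) ≤ 4 * b n` for all `n`. -/
theorem b_monotonicity (b : ℕ → ℕ) (h0 : b 0 = 1) (h1 : b 1 = 1)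
    (hrec : ∀ n : ℕ, 1 ≤ n →
      b (2 * n - 1) = ∑ k ∈ Finset.range n, Nat.choose (n - 1) k * 2 ^ (n - 1 - k) * b k ∧
      b (2 * n) = ∑ k ∈ Finset.range n, Nat.choose (n - 1) k * 2 ^ (n - 1 - k) * b k) :
    ∀ n : ℕ, b (n + 2) ≤ 4 * b n := by
  set P : ℕ → ℕ := fun m => ∑ k ∈ Finset.range (m + 1), m.choose k * 2 ^ (m - k) * b k
    with hP
  set R : ℕ → ℕ := fun m => ∑ k ∈ Finset.range (m + 1), m.choose k * 2 ^ (m - k) * b (k + 1)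
    with hRdef
  set Q : ℕ → ℕ := fun m => ∑ k ∈ Finset.range (m + 1), m.choose k * 2 ^ (m - k) * b (k + 2)
    with hQdef
  -- b at odd and even points equals P
  have hbodd : ∀ m : ℕ, b (2 * m + 1) = P m := by
    intro m
    have h := (hrec (m + 1) (by omega)).1
    have e : 2 * (m + 1) - 1 = 2 * m + 1 := by omega
    rw [e] at h
    rw [h, hP]
    simp [Nat.add_sub_cancel]
  have hbeven : ∀ m : ℕ, b (2 * m + 2) = P m := by
    intro m
    have h := (hrec (m + 1) (by omega)).2
    have e : 2 * (m + 1) = 2 * m + 2 := by omega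
    rw [e] at h
    rw [h, hP]
    simp [Nat.add_sub_cancel]
  have hP0 : P 0 = 1 := by simp [hP, h0]
  have hP1 : P 1 = 3 := by
    simp [hP, Finset.sum_range_succ, h0, h1]
  -- P (m+1) = 2 * P m + R m
  have hPR : ∀ m : ℕ, P (m + 1) = 2 * P m + R m := by
    intro m
    have hps := pascal_sum (fun k => 2 ^ (m + 1 - k) * b k) m
    have lhs_eq : P (m + 1) = ∑ k ∈ Finset.range (m + 2),
        (m + 1).choose k * (2 ^ (m + 1 - k) * b k) := by
      rw [hP]
      exact Finset.sum_congr rfl fun k _ => by ring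
    have fst_eq : (∑ k ∈ Finset.range (m + 1), m.choose k * (2 ^ (m + 1 - k) * b k))
        = 2 * P m := by
      rw [hP, Finset.mul_sum]
      refine Finset.sum_congr rfl fun k hk => ?_
      have hk' : k ≤ m := by simpa using Nat.lt_succ_iff.mp (Finset.mem_range.mp hk)
      have e : m + 1 - k = (m - k) + 1 := by omega
      rw [e, pow_succ]
      ring
    have snd_eq : (∑ k ∈ Finset.range (m + 1), m.choose k * (2 ^ (m + 1 - (k + 1)) * b (k + 1)))
        = R m := by
      rw [hRdef]
      refine Finset.sum_congr rfl fun k _ => ?_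
      have e : m + 1 - (k + 1) = m - k := by omega
      rw [e]; ring
    rw [lhs_eq, hps, fst_eq, snd_eq]
  -- R (m+1) = 2 * R m + Q m
  have hRQ : ∀ m : ℕ, R (m + 1) = 2 * R m + Q m := by
    intro m
    have hps := pascal_sum (fun k => 2 ^ (m + 1 - k) * b (k + 1)) m
    have lhs_eq : R (m + 1) = ∑ k ∈ Finset.range (m + 2),
        (m + 1).choose k * (2 ^ (m + 1 - k) * b (k + 1)) := by
      rw [hRdef]
      exact Finset.sum_congr rfl fun k _ => by ring
    have fst_eq : (∑ k ∈ Finset.range (m + 1), m.choose k * (2 ^ (m + 1 - k) * b (k + 1)))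
        = 2 * R m := by
      rw [hRdef, Finset.mul_sum]
      refine Finset.sum_congr rfl fun k hk => ?_
      have hk' : k ≤ m := by simpa using Nat.lt_succ_iff.mp (Finset.mem_range.mp hk)
      have e : m + 1 - k = (m - k) + 1 := by omega
      rw [e, pow_succ]
      ring
    have snd_eq : (∑ k ∈ Finset.range (m + 1), m.choose k * (2 ^ (m + 1 - (k + 1)) * b (k + 1 + 1)))
        = Q m := by
      rw [hQdef]
      refine Finset.sum_congr rfl fun k _ => ?_
      have e : m + 1 - (k + 1) = m - k := by omega
      rw [e]; ring
    rw [lhs_eq, hps, fst_eq, snd_eq]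
  -- the key identity : P (m+2) + 4 * P m = 4 * P (m+1) + Q m
  have hkey : ∀ m : ℕ, P (m + 2) + 4 * P m = 4 * P (m + 1) + Q m := by
    intro m
    have e1 : P (m + 2) = 2 * P (m + 1) + R (m + 1) := hPR (m + 1)
    have e2 := hPR m
    have e3 := hRQ m
    omega
  -- case analysis helper
  have helper : ∀ k : ℕ, (∀ i : ℕ, i ≤ k → P (i + 1) ≤ 4 * P i) → b (k + 2) ≤ 4 * b k := by
    intro k hIH
    rcases Nat.even_or_odd k with ⟨i, hi⟩ | ⟨i, hi⟩
    · -- k = 2 * i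
      have hk : k = 2 * i := by omega
      subst hk
      cases i with
      | zero =>
        have hb2 : b 2 = P 0 := by have := hbeven 0; simpa using this
        rw [show (0 : ℕ) + 2 = 2 by rfl] at *
        rw [hb2, hP0, h0]
        omega
      | succ i' =>
        have hb1 : b (2 * (i' + 1) + 2) = P (i' + 1) := hbeven (i' + 1)
        have hb2 : b (2 * i' + 2) = P i' := hbeven i'
        have e : 2 * (i' + 1) = 2 * i' + 2 := by omega
        rw [e] at hb1
        calc b (2 * (i' + 1) + 2) = P (i' + 1) := by rw [e]; exact hb1
          _ ≤ 4 * P i' := hIH i' (by omega)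
          _ = 4 * b (2 * (i' + 1)) := by rw [e, hb2]
    · -- k = 2 * i + 1
      have hk : k = 2 * i + 1 := by omega
      subst hk
      have hb1 : b (2 * (i + 1) + 1) = P (i + 1) := hbodd (i + 1)
      have hb2 : b (2 * i + 1) = P i := hbodd i
      have e : 2 * (i + 1) + 1 = 2 * i + 1 + 2 := by omega
      rw [e] at hb1
      rw [hb1, hb2]
      exact hIH i (by omega)
  -- main : P (j+1) ≤ 4 * P j by strong induction
  have main : ∀ j : ℕ, P (j + 1) ≤ 4 * P j := by
    intro j
    induction j using Nat.strong_induction_on with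
    | _ j IH =>
      match j with
      | 0 => rw [hP1, hP0]; omega
      | m + 1 =>
        have hid : P (m + 1 + 1) + 4 * P m = 4 * P (m + 1) + Q m := hkey m
        have hQle : Q m ≤ 4 * P m := by
          rw [hQdef, hP, Finset.mul_sum]
          refine Finset.sum_le_sum fun k hk => ?_
          have hk' : k ≤ m := Nat.lt_succ_iff.mp (Finset.mem_range.mp hk)
          have hb : b (k + 2) ≤ 4 * b k := by
            apply helper k
            intro i hi
            exact IH i (by omega)
          calc m.choose k * 2 ^ (m - k) * b (k + 2)
              ≤ m.choose k * 2 ^ (m - k) * (4 * b k) := Nat.mul_le_mul_left _ hb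
            _ = 4 * (m.choose k * 2 ^ (m - k) * b k) := by ring
        omega
  intro n
  exact helper n fun i _ => main i
end

section
/- Let τ = log₃ 2 and C_n = n^{−τ}·Σ_{k=0}^n ca_k where ca is the Cantor set sequence. Then limsup_{n→∞} C_n = 1, attained along n = 3^k. -/
/-!
Let `count m = #{n < m : ca n = 1}`. Splitting `[0, 3^(k+1))` into thirds, the middle third
contributes nothing and the upper third is a copy of the lower one, so `count (3^k + r) = 2^k`
and `count (2·3^k + r) = 2^k + count r` for `r ≤ 3^k`. Hence `count (3^k) = 2^k = (3^k)^τ`, and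
strong induction with the concavity of `t ↦ t^τ` gives `count m ≤ m^τ` for all `m`. Thus
`C n = n^(-τ) count (n + 1) ≤ (1 + 1/n)^τ → 1`, while `C (3^k) = 1`.
-/

open Filter

/-- The Cantor set sequence: `ca n = 1` if the base-3 expansion of `n` contains no
digit `1`, and `0` otherwise. -/
noncomputable def cantorSeq (n : ℕ) : ℕ := if 1 ∈ Nat.digits 3 n then 0 else 1

open Topology Finset

theorem Filter.limsup_eq_of_frequently_ge_of_le_of_tendsto {α β : Type*}
    [ConditionallyCompleteLinearOrder β] [TopologicalSpace β] [OrderTopology β]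
    {f : Filter α} {u v : α → β} {a : β} (hfreq : ∃ᶠ x in f, a ≤ u x) (hle : u ≤ᶠ[f] v)
    (hv : Tendsto v f (𝓝 a)) : limsup u f = a :=
  haveI : NeBot f := (frequently_true_iff_neBot f).1 (hfreq.mono fun _ _ => trivial)
  le_antisymm
    ((limsup_le_limsup hle (.of_frequently_ge hfreq) hv.isBoundedUnder_le).trans_eq hv.limsup_eq)
    (le_limsup_of_frequently_le hfreq (hv.isBoundedUnder_le.mono_le hle))

namespace Cantor

theorem one_mem_digits_add_three_pow_mul {s k d : ℕ} (hs : s < 3 ^ k) (hd₀ : d ≠ 0)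
    (hd₃ : d < 3) :
    1 ∈ Nat.digits 3 (s + 3 ^ k * d) ↔ 1 ∈ Nat.digits 3 s ∨ d = 1 := by
  have hlen : (Nat.digits 3 s).length ≤ k := (Nat.digits_length_le_iff (by norm_num) s).2 hs
  rw [← Nat.add_sub_cancel' hlen, ← Nat.digits_append_zeroes_append_digits (by norm_num)
    (Nat.pos_of_ne_zero hd₀), Nat.digits_of_lt 3 d hd₀ hd₃]
  simp [List.mem_replicate, eq_comm]

theorem cantorSeq_three_pow_add {k s : ℕ} (hs : s < 3 ^ k) : cantorSeq (3 ^ k + s) = 0 := by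
  have := one_mem_digits_add_three_pow_mul (d := 1) hs one_ne_zero (by norm_num)
  rw [mul_one, add_comm] at this
  simp only [cantorSeq, this, or_true, if_true]

theorem cantorSeq_two_mul_three_pow_add {k s : ℕ} (hs : s < 3 ^ k) :
    cantorSeq (2 * 3 ^ k + s) = cantorSeq s := by
  have := one_mem_digits_add_three_pow_mul (d := 2) hs two_ne_zero (by norm_num)
  rw [mul_comm, add_comm] at this
  simp only [cantorSeq, this, OfNat.ofNat_ne_one, or_false]

noncomputable def count (m : ℕ) : ℕ := ∑ n ∈ range m, cantorSeq n

theorem count_three_pow_add {k r : ℕ} (hr : r ≤ 3 ^ k) : count (3 ^ k + r) = count (3 ^ k) := by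
  rw [count, sum_range_add, ← count, add_eq_left]
  exact sum_eq_zero fun s hs => cantorSeq_three_pow_add ((mem_range.1 hs).trans_le hr)

theorem count_two_mul_three_pow_add {k r : ℕ} (hr : r ≤ 3 ^ k) :
    count (2 * 3 ^ k + r) = count (3 ^ k) + count r := by
  rw [count, sum_range_add, ← count, two_mul, count_three_pow_add le_rfl]
  congr 1
  exact sum_congr rfl fun s hs =>
    two_mul (3 ^ k) ▸ cantorSeq_two_mul_three_pow_add ((mem_range.1 hs).trans_le hr)

theorem count_three_pow (k : ℕ) : count (3 ^ k) = 2 ^ k := by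
  induction k with
  | zero => simp [count, cantorSeq]
  | succ k ih => rw [pow_succ, mul_comm, (by ring : 3 * 3 ^ k = 2 * 3 ^ k + 3 ^ k),
      count_two_mul_three_pow_add le_rfl, ih, pow_succ, mul_two]

noncomputable def dim : ℝ := Real.log 2 / Real.log 3

theorem dim_pos : 0 < dim := div_pos (Real.log_pos one_lt_two) (Real.log_pos (by norm_num))

theorem dim_le_one : dim ≤ 1 :=
  (div_le_one (Real.log_pos (by norm_num))).2 (Real.log_le_log (by norm_num) (by norm_num))

theorem three_rpow_dim : (3 : ℝ) ^ dim = 2 := by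
  rw [dim, Real.log_div_log, Real.rpow_logb (by norm_num) (by norm_num) (by norm_num)]

theorem three_pow_rpow_dim (k : ℕ) : ((3 : ℝ) ^ k) ^ dim = 2 ^ k := by
  rw [← Real.rpow_natCast, ← Real.rpow_mul (by norm_num), mul_comm, Real.rpow_mul (by norm_num),
    three_rpow_dim, Real.rpow_natCast]

-- Concavity of `t ↦ t ^ dim` at `(2A + x) / 3 = (2/3) A + (1/3) x`, rescaled by `3 ^ dim = 2`.
theorem rpow_dim_add_le_rpow_dim {A x : ℝ} (hx : 0 ≤ x) (hxA : x ≤ A) :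
    A ^ dim + x ^ dim ≤ (2 * A + x) ^ dim := by
  have hA : 0 ≤ A := hx.trans hxA
  have hconc := (Real.concaveOn_rpow dim_pos.le dim_le_one).2 (Set.mem_Ici.2 hA)
    (Set.mem_Ici.2 hx) (by norm_num : (0 : ℝ) ≤ 2 / 3) (by norm_num : (0 : ℝ) ≤ 1 / 3) (by norm_num)
  have hscale : (2 * A + x) ^ dim = 2 * (2 / 3 * A + 1 / 3 * x) ^ dim := by
    rw [← three_rpow_dim, ← Real.mul_rpow (by norm_num) (by positivity)]
    ring_nf
  have hmono : x ^ dim ≤ A ^ dim := Real.rpow_le_rpow hx hxA dim_pos.le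
  simp only [smul_eq_mul] at hconc
  linarith

theorem count_le_rpow_dim (m : ℕ) : (count m : ℝ) ≤ (m : ℝ) ^ dim := by
  induction m using Nat.strong_induction_on with
  | _ m ih =>
  rcases Nat.eq_zero_or_pos m with rfl | hm
  · simp [count, Real.zero_rpow dim_pos.ne']
  obtain ⟨k, hlow, hhigh⟩ : ∃ k, 3 ^ k ≤ m ∧ m < 3 * 3 ^ k := ⟨Nat.log 3 m,
    Nat.pow_log_le_self 3 hm.ne', by
      simpa [pow_succ, mul_comm] using Nat.lt_pow_succ_log_self (by norm_num : 1 < 3) m⟩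
  rcases le_or_gt m (2 * 3 ^ k) with hmid | htop
  · obtain ⟨r, rfl⟩ := Nat.exists_eq_add_of_le hlow
    rw [count_three_pow_add (by omega), count_three_pow]
    push_cast
    rw [← three_pow_rpow_dim]
    exact Real.rpow_le_rpow (by positivity) (by linarith [(r.cast_nonneg : (0 : ℝ) ≤ r)])
      dim_pos.le
  · obtain ⟨r, rfl⟩ := Nat.exists_eq_add_of_lt htop
    have hr : r + 1 < 3 ^ k := by omega
    calc (count (2 * 3 ^ k + r + 1) : ℝ) = ((3 : ℝ) ^ k) ^ dim + count (r + 1) := by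
          rw [add_assoc, count_two_mul_three_pow_add hr.le, count_three_pow, three_pow_rpow_dim]
          push_cast; rfl
      _ ≤ ((3 : ℝ) ^ k) ^ dim + ((r + 1 : ℕ) : ℝ) ^ dim := by gcongr; exact ih _ (by omega)
      _ ≤ ((2 * 3 ^ k + r + 1 : ℕ) : ℝ) ^ dim := by
          rw [add_assoc]; push_cast
          exact rpow_dim_add_le_rpow_dim (by positivity) (by exact_mod_cast hr.le)

theorem sum_range_cantorSeq (n : ℕ) : ∑ j ∈ range n, (cantorSeq j : ℝ) = count n := by
  rw [count, Nat.cast_sum]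

theorem rpow_neg_dim_mul_count_succ_le {n : ℕ} (hn : n ≠ 0) :
    (n : ℝ) ^ (-dim) * count (n + 1) ≤ (1 + (n : ℝ)⁻¹) ^ dim := by
  have hn' : (0 : ℝ) < n := by positivity
  have hbase : 1 + (n : ℝ)⁻¹ = ((n + 1 : ℕ) : ℝ) / n := by push_cast; field_simp
  rw [hbase, Real.div_rpow (by positivity) hn'.le, Real.rpow_neg hn'.le, inv_mul_eq_div]
  gcongr
  exact count_le_rpow_dim (n + 1)

theorem three_pow_rpow_neg_dim_mul_count_succ (k : ℕ) :
    ((3 : ℝ) ^ k) ^ (-dim) * count (3 ^ k + 1) = 1 := by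
  rw [count_three_pow_add (Nat.one_le_pow _ _ (by norm_num)), count_three_pow,
    Real.rpow_neg (by positivity), three_pow_rpow_dim]
  push_cast
  exact inv_mul_cancel₀ (by positivity)

theorem tendsto_one_add_inv_rpow_dim :
    Tendsto (fun n : ℕ => (1 + (n : ℝ)⁻¹) ^ dim) atTop (𝓝 1) := by
  simpa using ((tendsto_inv_atTop_zero.comp tendsto_natCast_atTop_atTop).const_add 1).rpow_const
    (Or.inr dim_pos.le)

end Cantor

open Cantor in
/-- For `τ = log₃ 2` and `C n = n^(-τ) * ∑_{k=0}^n ca k`, the limit superior of `C n`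
is `1`, attained along `n = 3^k`. -/
theorem cantor_limsup :
    Filter.limsup (fun n : ℕ =>
      (n : ℝ) ^ (-(Real.log 2 / Real.log 3)) *
        ∑ k ∈ Finset.range (n + 1), (cantorSeq k : ℝ)) atTop = 1 ∧
    ∀ k : ℕ, ((3 : ℝ) ^ k) ^ (-(Real.log 2 / Real.log 3)) *
        ∑ j ∈ Finset.range (3 ^ k + 1), (cantorSeq j : ℝ) = 1 := by
  have hpow (k : ℕ) : ((3 : ℝ) ^ k) ^ (-dim) * ∑ j ∈ range (3 ^ k + 1), (cantorSeq j : ℝ) = 1 := by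
    rw [sum_range_cantorSeq, three_pow_rpow_neg_dim_mul_count_succ]
  refine ⟨limsup_eq_of_frequently_ge_of_le_of_tendsto ?_ ?_ tendsto_one_add_inv_rpow_dim, hpow⟩
  · refine frequently_atTop.2 fun N => ⟨3 ^ N, (Nat.lt_pow_self (by norm_num)).le, ?_⟩
    push_cast
    exact (hpow N).ge
  · filter_upwards [eventually_ne_atTop 0] with n hn
    rw [sum_range_cantorSeq]
    exact rpow_neg_dim_mul_count_succ_le hn
end

section
/- Let L(z) be a function holomorphic for |z| > 2 (real z > 2 suffices) satisfying L(z) = (1 + z)·L(z² − 2) with L(z) = Σ_{n≥0} l_n z^{−n−1}. Substituting z = w + w⁻¹ and writing L(z) = w·h(w), the function h satisfies h(w) = (1 + w + w²)·h(w²). In particular, as formal power series, h(w) = ∏_{n≥0} (1 + w^{2^n} + w^{2·2^n}). -/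
/-!
Since `(w + w⁻¹)² - 2 = w² + w⁻²`, the functional equation of `L` at `z = w + w⁻¹` is
`h(w) = (1 + w + w²) h(w²)` for `h(w) = L(w + w⁻¹)/w`. Iterating it gives
`h(w) = ∏_{k<N} (1 + w^(2^k) + w^(2·2^k)) · h(w^(2^N))`, and `h(v) → 1` as `v → 0⁺`
because `z L(z) → l₀ = 1` as `z → ∞`; so the partial products converge to `h(w)`.
-/

open Filter Topology Finset

theorem tendsto_mul_tsum_div_pow_succ_atTop {l : ℕ → ℝ} {a : ℝ} (ha : 0 < a)
    (hs : Summable fun n => l n / a ^ (n + 1)) :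
    Tendsto (fun z => z * ∑' n, l n / z ^ (n + 1)) atTop (𝓝 (l 0)) := by
  have h_eq :
      (fun z : ℝ => ∑' n, l n / z ^ n) =ᶠ[atTop] fun z => z * ∑' n, l n / z ^ (n + 1) := by
    filter_upwards [eventually_gt_atTop 0] with z hz
    rw [← tsum_mul_left]
    congr 1 with n
    field_simp
    ring
  refine Tendsto.congr' h_eq ?_
  rw [← tsum_ite_eq 0 l]
  -- summability in `ℝ` is absolute, so `a |l n / a ^ (n + 1)|` dominates `l n / z ^ n` for `z ≥ a`
  refine tendsto_tsum_of_dominated_convergence (bound := fun n => a * |l n / a ^ (n + 1)|)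
    (hs.abs.mul_left a) (fun n => ?_) ?_
  · rcases n with _ | n
    · simp
    · simpa [div_eq_mul_inv] using
        (tendsto_pow_atTop n.succ_ne_zero).inv_tendsto_atTop.const_mul (l (n + 1))
  · filter_upwards [eventually_ge_atTop a] with z hz n
    rw [Real.norm_eq_abs, abs_div, abs_div, abs_of_pos (pow_pos ha _),
      abs_of_pos (pow_pos (ha.trans_le hz) _), pow_succ, ← div_div, mul_div_cancel₀ _ ha.ne']
    gcongr

theorem div_add_inv_eq_of_eq_one_add_mul_sq_sub_two {L : ℝ → ℝ}
    (hfun : ∀ z : ℝ, 2 < z → L z = (1 + z) * L (z ^ 2 - 2)) {w : ℝ} (hw0 : 0 < w) (hw1 : w < 1) :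
    L (w + w⁻¹) / w = (1 + w + w ^ 2) * (L (w ^ 2 + (w ^ 2)⁻¹) / w ^ 2) := by
  have h_two_lt : 2 < w + w⁻¹ := by
    rw [← sub_pos, show w + w⁻¹ - 2 = (1 - w) ^ 2 / w by field_simp; ring]
    exact div_pos (pow_pos (sub_pos.2 hw1) 2) hw0
  have h_sq : (w + w⁻¹) ^ 2 - 2 = w ^ 2 + (w ^ 2)⁻¹ := by
    field_simp
    ring
  rw [hfun _ h_two_lt, h_sq]
  field_simp
  ring

theorem tendsto_div_add_inv_nhdsGT_zero {L : ℝ → ℝ}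
    (hL : Tendsto (fun z => z * L z) atTop (𝓝 1)) :
    Tendsto (fun v => L (v + v⁻¹) / v) (𝓝[>] 0) (𝓝 1) := by
  have h_inv : Tendsto (fun v : ℝ => v + v⁻¹) (𝓝[>] 0) atTop :=
    tendsto_atTop_mono' _ (eventually_mem_nhdsWithin.mono fun v (hv : 0 < v) =>
      le_add_of_nonneg_left hv.le) tendsto_inv_nhdsGT_zero
  have h_den : Tendsto (fun v : ℝ => 1 + v ^ 2) (𝓝[>] 0) (𝓝 1) := by
    have h_cont : Continuous fun v : ℝ => 1 + v ^ 2 := by fun_prop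
    simpa using (h_cont.tendsto' 0 1 (by simp)).mono_left nhdsWithin_le_nhds
  have h_eq : (fun v => (v + v⁻¹) * L (v + v⁻¹) / (1 + v ^ 2)) =ᶠ[𝓝[>] 0]
      fun v => L (v + v⁻¹) / v := by
    filter_upwards [self_mem_nhdsWithin] with v (hv : 0 < v)
    field_simp
    ring
  simpa using ((hL.comp h_inv).div h_den one_ne_zero).congr' h_eq

theorem Set.MapsTo.eq_prod_range_mul_iterate {α M : Type*} [CommMonoid M] {s : Set α}
    {φ : α → α} (hφ : MapsTo φ s s) {h g : α → M} (hhg : ∀ x ∈ s, h x = g x * h (φ x))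
    {x : α} (hx : x ∈ s) (N : ℕ) :
    h x = (∏ k ∈ Finset.range N, g (φ^[k] x)) * h (φ^[N] x) := by
  induction N with
  | zero => simp
  | succ N ih =>
    rw [ih, hhg _ (hφ.iterate N hx), Finset.prod_range_succ, Function.iterate_succ_apply',
      mul_assoc]

theorem Set.MapsTo.tendsto_prod_range_iterate {α K : Type*} [NormedField K] {s : Set α}
    {φ : α → α} (hφ : MapsTo φ s s) {h g : α → K} (hhg : ∀ x ∈ s, h x = g x * h (φ x))
    {x : α} (hx : x ∈ s) {l : Filter α} (h_iter : Tendsto (φ^[·] x) atTop l)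
    (h_one : Tendsto h l (𝓝 1)) :
    Tendsto (fun N => ∏ k ∈ Finset.range N, g (φ^[k] x)) atTop (𝓝 (h x)) := by
  have h_lim := h_one.comp h_iter
  have h_eq :
      (fun N => h x / h (φ^[N] x)) =ᶠ[atTop] fun N => ∏ k ∈ Finset.range N, g (φ^[k] x) := by
    filter_upwards [h_lim.eventually_ne one_ne_zero] with N hN
    exact (div_eq_iff hN).2 (hφ.eq_prod_range_mul_iterate hhg hx N)
  simpa using (tendsto_const_nhds.div h_lim one_ne_zero).congr' h_eq

/-- Suppose `L(z) = ∑_{n≥0} l_n z^{-n-1}` converges for real `z > 2`, `l_0 = 1`, and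
`L(z) = (1 + z) L(z² - 2)`. Substituting `z = w + w⁻¹` and writing `L(z) = w · h(w)`,
the function `h(w) = L(w + w⁻¹)/w` satisfies `h(w) = (1 + w + w²) h(w²)` for
`w ∈ (0,1)`, and moreover `h(w) = ∏_{n≥0} (1 + w^(2^n) + w^(2·2^n))`. -/
theorem length_generating_function (l : ℕ → ℝ) (hl0 : l 0 = 1)
    (hconv : ∀ z : ℝ, 2 < z → Summable (fun n : ℕ => l n / z ^ (n + 1)))
    (L : ℝ → ℝ) (hL : ∀ z : ℝ, 2 < z → L z = ∑' n : ℕ, l n / z ^ (n + 1))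
    (hfun : ∀ z : ℝ, 2 < z → L z = (1 + z) * L (z ^ 2 - 2)) :
    ∀ w : ℝ, 0 < w → w < 1 →
      L (w + w⁻¹) / w = (1 + w + w ^ 2) * (L (w ^ 2 + (w ^ 2)⁻¹) / w ^ 2) ∧
      L (w + w⁻¹) / w = ∏' n : ℕ, (1 + w ^ (2 ^ n) + w ^ (2 * 2 ^ n)) := by
  have h_fe : ∀ v ∈ Set.Ioo (0 : ℝ) 1,
      L (v + v⁻¹) / v = (1 + v + v ^ 2) * (L (v ^ 2 + (v ^ 2)⁻¹) / v ^ 2) :=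
    fun v hv => div_add_inv_eq_of_eq_one_add_mul_sq_sub_two hfun hv.1 hv.2
  have h_zL : Tendsto (fun z => z * L z) atTop (𝓝 1) := by
    rw [← hl0]
    refine (tendsto_mul_tsum_div_pow_succ_atTop three_pos (hconv 3 (by norm_num))).congr' ?_
    filter_upwards [eventually_gt_atTop 2] with z hz
    rw [hL z hz]
  have h_sq : Set.MapsTo (· ^ 2) (Set.Ioo (0 : ℝ) 1) (Set.Ioo 0 1) :=
    fun v hv => ⟨pow_pos hv.1 2, pow_lt_one₀ hv.1.le hv.2 two_ne_zero⟩
  intro w hw0 hw1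
  refine ⟨h_fe w ⟨hw0, hw1⟩, ?_⟩
  have h_iter : Tendsto (fun N => (· ^ 2)^[N] w) atTop (𝓝[>] 0) := by
    simp only [pow_iterate]
    exact tendsto_nhdsWithin_iff.2 ⟨(tendsto_pow_atTop_nhds_zero_of_lt_one hw0.le hw1).comp
      (tendsto_pow_atTop_atTop_of_one_lt one_lt_two), .of_forall fun N => pow_pos hw0 _⟩
  have h_partial := h_sq.tendsto_prod_range_iterate (g := fun v => 1 + v + v ^ 2) h_fe
    ⟨hw0, hw1⟩ h_iter (tendsto_div_add_inv_nhdsGT_zero h_zL)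
  simp only [pow_iterate, ← pow_mul'] at h_partial
  have h_mult : Multipliable fun n : ℕ => 1 + w ^ (2 ^ n) + w ^ (2 * 2 ^ n) := by
    have h_geom := summable_geometric_of_lt_one hw0.le hw1
    simpa only [add_assoc, Function.comp_def] using Real.multipliable_one_add_of_summable
      ((h_geom.comp_injective (Nat.pow_right_injective le_rfl)).add
        (h_geom.comp_injective
          ((mul_right_injective₀ two_ne_zero).comp (Nat.pow_right_injective le_rfl))))
  exact ((h_mult.hasProd_iff_tendsto_nat).2 h_partial).tprod_eq.symm
end

section
/- Let h(w) = ∏_{n≥0} (1 + w^{2^n} + w^{2·2^n}) ∈ ℤ[[w]] (convergent for 0 ≤ w < 1). Set τ = log₂ 3. Then there exist constants 0 < C₁ ≤ C₂ such that C₁·(1−w)^{−τ} ≤ h(w) ≤ C₂·(1−w)^{−τ} for all w in some interval [t, 1) with 0 < t < 1. -/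
/-!
For `x = w ^ 2 ^ n ≥ 1 / 2` the factor `1 + x + x ^ 2` lies in `[3 x ^ 2, 3]`, and the squares
telescope, so if `N` is the last index with `w ^ 2 ^ N ≥ 1 / 2` the first `N + 1` factors
multiply to `3 ^ (N + 1)` up to a factor `16`. The remaining factors form `h (w ^ 2 ^ (N + 1))`,
which lies in `[1, e ^ 2]` because its argument is below `1 / 2`. Bernoulli's inequality gives
`2 ^ (N + 1) * (1 - w) ∈ [1 / 2, 2]`, hence `3 ^ (N + 1) = (2 ^ (N + 1)) ^ τ` is within a factor
`3` of `(1 - w) ^ (-τ)`.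
-/

open Real Finset

lemma two_pow_rpow_logb_three (k : ℕ) : ((2 : ℝ) ^ k) ^ logb 2 3 = 3 ^ k := by
  rw [← rpow_pow_comm zero_le_two, rpow_logb two_pos (by norm_num) three_pos]

lemma rpow_le_mul_rpow_neg {a u c τ : ℝ} (ha : 0 ≤ a) (hu : 0 < u) (hτ : 0 ≤ τ)
    (h : a * u ≤ c) : a ^ τ ≤ c ^ τ * u ^ (-τ) := by
  have hle : a ≤ c / u := (le_div_iff₀ hu).2 h
  rw [rpow_neg hu.le, ← div_eq_mul_inv, ← div_rpow ((mul_nonneg ha hu.le).trans h) hu.le]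
  exact rpow_le_rpow ha hle hτ

lemma mul_rpow_neg_le_rpow {a u c τ : ℝ} (hc : 0 ≤ c) (hu : 0 < u) (hτ : 0 ≤ τ)
    (h : c ≤ a * u) : c ^ τ * u ^ (-τ) ≤ a ^ τ := by
  rw [rpow_neg hu.le, ← div_eq_mul_inv, ← div_rpow hc hu.le]
  exact rpow_le_rpow (div_nonneg hc hu.le) ((div_le_iff₀ hu).2 h) hτ

/-- `h`, the generating function of hyperbinary representations (base `2`, digits `0, 1, 2`),
with `w ^ (2 * 2 ^ n)` written as `(w ^ 2 ^ n) ^ 2`. -/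
noncomputable def hyperbinaryProduct (w : ℝ) : ℝ :=
  ∏' n : ℕ, (1 + w ^ 2 ^ n + (w ^ 2 ^ n) ^ 2)

section

variable {w : ℝ}

lemma pow_two_pow_le_pow_succ (hw₀ : 0 ≤ w) (hw₁ : w ≤ 1) (n : ℕ) :
    w ^ 2 ^ n ≤ w ^ (n + 1) :=
  pow_le_pow_of_le_one hw₀ hw₁ n.lt_two_pow_self

lemma summable_pow_two_pow (hw₀ : 0 ≤ w) (hw₁ : w < 1) : Summable fun n : ℕ ↦ w ^ 2 ^ n :=
  (summable_geometric_of_lt_one hw₀ hw₁).of_nonneg_of_le (fun n ↦ by positivity)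
    fun n ↦ pow_le_pow_of_le_one hw₀ hw₁.le n.lt_two_pow_self.le

lemma exists_half_le_pow_two_pow_lt_half (hw : 1 / 2 ≤ w) (hw₁ : w < 1) :
    ∃ N : ℕ, 1 / 2 ≤ w ^ 2 ^ N ∧ w ^ 2 ^ (N + 1) < 1 / 2 := by
  have hw₀ : 0 ≤ w := by linarith
  have hex : ∃ n : ℕ, w ^ 2 ^ (n + 1) < 1 / 2 := by
    obtain ⟨n, hn⟩ := exists_pow_lt_of_lt_one (by norm_num : (0 : ℝ) < 1 / 2) hw₁
    exact ⟨n, (pow_le_pow_of_le_one hw₀ hw₁.le (n.lt_two_pow_self.trans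
      (Nat.pow_lt_pow_succ one_lt_two)).le).trans_lt hn⟩
  refine ⟨Nat.find hex, ?_, Nat.find_spec hex⟩
  rcases h : Nat.find hex with _ | k
  · simpa using hw
  · exact not_lt.1 (Nat.find_min hex (h ▸ k.lt_succ_self))

lemma mul_one_sub_le_one_of_half_le_pow (hw₀ : 0 < w) (hw₁ : w ≤ 1) {m : ℕ}
    (h : 1 / 2 ≤ w ^ m) : m * (1 - w) ≤ 1 := by
  have hbern :=
    one_add_mul_le_pow (a := w⁻¹ - 1) (by linarith [one_le_inv_iff₀.2 ⟨hw₀, hw₁⟩]) m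
  rw [add_sub_cancel, inv_pow] at hbern
  have hinv : (w ^ m)⁻¹ ≤ 2 := by
    rw [inv_le_comm₀ (by positivity) two_pos]; linarith
  have hgap : 1 - w ≤ w⁻¹ - 1 := by
    nlinarith [mul_inv_cancel₀ hw₀.ne', inv_pos.2 hw₀, sq_nonneg (1 - w)]
  nlinarith [mul_le_mul_of_nonneg_left hgap (Nat.cast_nonneg (α := ℝ) m)]

lemma half_lt_mul_one_sub_of_pow_lt_half (hw : -1 ≤ w) {m : ℕ} (h : w ^ m < 1 / 2) :
    1 / 2 < m * (1 - w) := by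
  have := one_add_mul_le_pow (a := w - 1) (by linarith) m
  rw [add_sub_cancel] at this
  linarith

lemma multipliable_hyperbinaryProduct (hw₀ : 0 ≤ w) (hw₁ : w < 1) :
    Multipliable fun n : ℕ ↦ 1 + w ^ 2 ^ n + (w ^ 2 ^ n) ^ 2 := by
  have hs := summable_pow_two_pow hw₀ hw₁
  have hs₂ : Summable fun n : ℕ ↦ (w ^ 2 ^ n) ^ 2 :=
    hs.of_nonneg_of_le (fun n ↦ by positivity)
      fun n ↦ pow_le_of_le_one (by positivity) (pow_le_one₀ hw₀ hw₁.le) two_ne_zero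
  simpa only [add_assoc] using Real.multipliable_one_add_of_summable (hs.add hs₂)

lemma hyperbinaryProduct_eq_prod_mul (hw₀ : 0 ≤ w) (hw₁ : w < 1) (m : ℕ) :
    hyperbinaryProduct w = (∏ n ∈ range m, (1 + w ^ 2 ^ n + (w ^ 2 ^ n) ^ 2)) *
      hyperbinaryProduct (w ^ 2 ^ m) := by
  have htail : (fun n ↦ 1 + w ^ 2 ^ (n + m) + (w ^ 2 ^ (n + m)) ^ 2) =
      fun n ↦ 1 + (w ^ 2 ^ m) ^ 2 ^ n + ((w ^ 2 ^ m) ^ 2 ^ n) ^ 2 := by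
    funext n
    rw [pow_add, mul_comm (2 ^ n), pow_mul]
  have hm : Multipliable fun n ↦ 1 + w ^ 2 ^ (n + m) + (w ^ 2 ^ (n + m)) ^ 2 := by
    rw [htail]
    exact multipliable_hyperbinaryProduct (pow_nonneg hw₀ _)
      (pow_lt_one₀ hw₀ hw₁ (by positivity))
  rw [hyperbinaryProduct, ← Multipliable.prod_mul_tprod_nat_mul'
    (f := fun n ↦ 1 + w ^ 2 ^ n + (w ^ 2 ^ n) ^ 2) (k := m) hm, htail, hyperbinaryProduct]

lemma one_le_hyperbinaryProduct (hw₀ : 0 ≤ w) (hw₁ : w < 1) : 1 ≤ hyperbinaryProduct w :=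
  ge_of_tendsto' (multipliable_hyperbinaryProduct hw₀ hw₁).hasProd fun s ↦
    one_le_prod fun n _ ↦
      le_add_of_le_of_nonneg (le_add_of_nonneg_right (by positivity)) (sq_nonneg _)

lemma hyperbinaryProduct_le_exp_two (hw₀ : 0 ≤ w) (hw : w ≤ 1 / 2) :
    hyperbinaryProduct w ≤ exp 2 := by
  have hterm (n : ℕ) : w ^ 2 ^ n + (w ^ 2 ^ n) ^ 2 ≤ (1 / 2) ^ n := by
    have h := (pow_two_pow_le_pow_succ hw₀ (by linarith) n).trans
      (pow_le_pow_left₀ hw₀ hw (n + 1))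
    have hx₀ : 0 ≤ w ^ 2 ^ n := by positivity
    have hx₁ : w ^ 2 ^ n ≤ 1 := pow_le_one₀ hw₀ (by linarith)
    rw [pow_succ] at h
    nlinarith [mul_le_mul_of_nonneg_left hx₁ hx₀]
  refine tprod_le_of_prod_le' (one_le_exp zero_le_two) fun s ↦ ?_
  calc ∏ n ∈ s, (1 + w ^ 2 ^ n + (w ^ 2 ^ n) ^ 2)
      = ∏ n ∈ s, (1 + (w ^ 2 ^ n + (w ^ 2 ^ n) ^ 2)) := by simp only [add_assoc]
    _ ≤ exp (∑ n ∈ s, (w ^ 2 ^ n + (w ^ 2 ^ n) ^ 2)) :=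
      Real.prod_one_add_le_exp_sum s fun n ↦ by positivity
    _ ≤ exp (∑' n : ℕ, (1 / 2 : ℝ) ^ n) := by
      gcongr
      exact (sum_le_sum fun n _ ↦ hterm n).trans
        (summable_geometric_two.sum_le_tsum s fun n _ ↦ by positivity)
    _ = exp 2 := by rw [tsum_geometric_two]

lemma three_pow_mul_sq_le_prod_range (hw₀ : 0 ≤ w) (hw₁ : w ≤ 1) (m : ℕ) :
    3 ^ m * (w ^ 2 ^ m) ^ 2 ≤ ∏ n ∈ range m, (1 + w ^ 2 ^ n + (w ^ 2 ^ n) ^ 2) := by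
  induction m with
  | zero =>
    simp only [pow_zero, pow_one, one_mul, prod_range_zero]
    exact pow_le_one₀ hw₀ hw₁
  | succ m ih =>
    set x := w ^ 2 ^ m
    have hx₀ : 0 ≤ x := by positivity
    have hx₁ : x ≤ 1 := pow_le_one₀ hw₀ hw₁
    have hsq : w ^ 2 ^ (m + 1) = x ^ 2 := by rw [pow_succ, pow_mul]
    rw [prod_range_succ, hsq]
    calc 3 ^ (m + 1) * (x ^ 2) ^ 2 = (3 ^ m * x ^ 2) * (3 * x ^ 2) := by ring
      _ ≤ _ := mul_le_mul ih (by nlinarith) (by positivity) (by positivity)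

lemma prod_range_le_three_pow (hw₀ : 0 ≤ w) (hw₁ : w ≤ 1) (m : ℕ) :
    ∏ n ∈ range m, (1 + w ^ 2 ^ n + (w ^ 2 ^ n) ^ 2) ≤ 3 ^ m := by
  refine (prod_le_prod (fun n _ ↦ by positivity) fun n _ ↦ ?_).trans_eq
    (by rw [prod_const, card_range])
  have h₀ : 0 ≤ w ^ 2 ^ n := by positivity
  have h₁ : w ^ 2 ^ n ≤ 1 := pow_le_one₀ hw₀ hw₁
  nlinarith

lemma hyperbinaryProduct_bounds_of_bracket (hw₀ : 0 ≤ w) {N : ℕ}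
    (hN : 1 / 2 ≤ w ^ 2 ^ N) (hN₁ : w ^ 2 ^ (N + 1) < 1 / 2) :
    3 ^ (N + 1) / 16 ≤ hyperbinaryProduct w ∧ hyperbinaryProduct w ≤ exp 2 * 3 ^ (N + 1) := by
  have hw₁ : w < 1 :=
    (pow_lt_one_iff_of_nonneg hw₀ (by positivity)).1 (hN₁.trans (by norm_num))
  have hsq : 1 / 16 ≤ (w ^ 2 ^ (N + 1)) ^ 2 := by
    rw [pow_succ 2 N, pow_mul]
    calc (1 : ℝ) / 16 = ((1 / 2) ^ 2) ^ 2 := by norm_num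
      _ ≤ _ := by gcongr
  rw [hyperbinaryProduct_eq_prod_mul hw₀ hw₁ (N + 1)]
  set P := ∏ n ∈ range (N + 1), (1 + w ^ 2 ^ n + (w ^ 2 ^ n) ^ 2)
  have hP₀ := three_pow_mul_sq_le_prod_range hw₀ hw₁.le (N + 1)
  have hP₁ : P ≤ 3 ^ (N + 1) := prod_range_le_three_pow hw₀ hw₁.le (N + 1)
  have hT₀ :=
    one_le_hyperbinaryProduct (pow_nonneg hw₀ (2 ^ (N + 1))) (hN₁.trans (by norm_num))
  have hT₁ := hyperbinaryProduct_le_exp_two (pow_nonneg hw₀ (2 ^ (N + 1))) hN₁.le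
  constructor
  · calc 3 ^ (N + 1) / 16 ≤ 3 ^ (N + 1) * (w ^ 2 ^ (N + 1)) ^ 2 := by
          have : (0 : ℝ) < 3 ^ (N + 1) := by positivity
          nlinarith
      _ ≤ P := hP₀
      _ ≤ _ := le_mul_of_one_le_right (by positivity) hT₀
  · calc P * hyperbinaryProduct (w ^ 2 ^ (N + 1)) ≤ 3 ^ (N + 1) * exp 2 :=
          mul_le_mul hP₁ hT₁ (by positivity) (by positivity)
      _ = exp 2 * 3 ^ (N + 1) := mul_comm _ _

lemma three_pow_succ_bounds_of_bracket (hw₀ : 0 < w) (hw₁ : w < 1) {N : ℕ}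
    (hN : 1 / 2 ≤ w ^ 2 ^ N) (hN₁ : w ^ 2 ^ (N + 1) < 1 / 2) :
    (1 - w) ^ (-logb 2 3) / 3 ≤ 3 ^ (N + 1) ∧ 3 ^ (N + 1) ≤ 3 * (1 - w) ^ (-logb 2 3) := by
  have hu : 0 < 1 - w := by linarith
  have hτ : 0 ≤ logb 2 3 := logb_nonneg one_lt_two (by norm_num)
  have hupper : (2 : ℝ) ^ (N + 1) * (1 - w) ≤ 2 := by
    have := mul_one_sub_le_one_of_half_le_pow hw₀ hw₁.le hN
    push_cast at this
    rw [pow_succ]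
    linarith
  have hlower : 1 / 2 ≤ (2 : ℝ) ^ (N + 1) * (1 - w) := by
    have := half_lt_mul_one_sub_of_pow_lt_half (by linarith) hN₁
    push_cast at this
    exact this.le
  have h2τ : (2 : ℝ) ^ logb 2 3 = 3 := rpow_logb two_pos (by norm_num) three_pos
  rw [← two_pow_rpow_logb_three]
  constructor
  · have := mul_rpow_neg_le_rpow (by norm_num) hu hτ hlower
    rwa [one_div, inv_rpow zero_le_two, h2τ, inv_mul_eq_div] at this
  · simpa only [h2τ] using rpow_le_mul_rpow_neg (by positivity) hu hτ hupper

end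

/-- For `h(w) = ∏_{n≥0} (1 + w^(2^n) + w^(2·2^n))` and `τ = log₂ 3`, there exist
constants `0 < C₁ ≤ C₂` with `C₁ (1-w)^(-τ) ≤ h(w) ≤ C₂ (1-w)^(-τ)` on some `[t,1)`. -/
theorem length_product_asymptotics :
    ∃ t : ℝ, 0 < t ∧ t < 1 ∧ ∃ C₁ C₂ : ℝ, 0 < C₁ ∧ C₁ ≤ C₂ ∧
      ∀ w : ℝ, t ≤ w → w < 1 →
        C₁ * (1 - w) ^ (-(Real.log 3 / Real.log 2)) ≤
          (∏' n : ℕ, (1 + w ^ (2 ^ n) + w ^ (2 * 2 ^ n))) ∧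
        (∏' n : ℕ, (1 + w ^ (2 ^ n) + w ^ (2 * 2 ^ n))) ≤
          C₂ * (1 - w) ^ (-(Real.log 3 / Real.log 2)) := by
  refine ⟨1 / 2, by norm_num, by norm_num, 1 / 48, 3 * exp 2, by norm_num,
    by linarith [add_one_le_exp 2], fun w hw hw₁ ↦ ?_⟩
  have hw₀ : 0 < w := by linarith
  obtain ⟨N, hN, hN₁⟩ := exists_half_le_pow_two_pow_lt_half hw hw₁
  obtain ⟨hh₀, hh₁⟩ := hyperbinaryProduct_bounds_of_bracket hw₀.le hN hN₁
  obtain ⟨h3₀, h3₁⟩ := three_pow_succ_bounds_of_bracket hw₀ hw₁ hN hN₁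
  have heq : ∏' n : ℕ, (1 + w ^ (2 ^ n) + w ^ (2 * 2 ^ n)) = hyperbinaryProduct w :=
    tprod_congr fun n ↦ by rw [pow_mul']
  rw [heq, log_div_log]
  constructor <;> nlinarith [exp_pos 2]
end

section
/- Let A be a transitive unital ℤ₊-ring of finite rank with basis B = (b_j) containing 1, and suppose b, b* ∈ B are such that the decomposition of b·b* in the basis B contains 1 = b₀ with positive coefficient. Then there exists n ≥ 0 such that the B-decomposition of b^n contains b* with positive coefficient. -/
/-!
Let `M` be the matrix of left multiplication by `b` in the basis `B`, and `Q` that of right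
multiplication by `∑ B`. By associativity `Q` commutes with `M`, and by transitivity all entries
of `Q` are positive. Reading `M` as a directed graph on `B`, the hypothesis `1 ∈ b b*` is an edge
and the claim is that this edge lies on a cycle; this holds for every nonnegative integer matrix
commuting with a positive one.

Indeed, commuting with `Q` makes all row and column sums of `M ^ m` agree up to a constant factor,
so the number `g m` of walks of length `m` from a fixed vertex `y` is submultiplicative up to a
constant. Let `S` be the set of vertices reachable from `y` and suppose there is an edge `x → y`
with `x ∉ S`. The walks of length `m + 1` that start outside `S` and cross into `S` along `x → y`
at one of `m` possible times number at least a constant times `m * g m`, whereas all walks of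
length `m + 1` number at most a constant times `g m`.
-/

open Finset Matrix

section WalkCounting

variable {ι : Type*} [Fintype ι]

theorem Matrix.sum_row_mul (M N : Matrix ι ι ℕ) (j : ι) :
    ∑ k, (M * N) j k = ∑ x, M j x * ∑ k, N x k := by
  simp only [mul_apply, mul_sum]
  exact sum_comm

theorem Matrix.sum_row_le_mul_sum_col {M Q : Matrix ι ι ℕ} {ρ : ℕ} (hMQ : Commute M Q)
    (hQ : ∀ j k, 0 < Q j k) (hρ : ∀ j k, Q j k ≤ ρ) (j k : ι) :
    ∑ x, M j x ≤ ρ * ∑ x, M x k :=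
  calc ∑ x, M j x ≤ ∑ x, M j x * Q x k := sum_le_sum fun x _ => Nat.le_mul_of_pos_right _ (hQ x k)
    _ = ∑ x, Q j x * M x k := by rw [← mul_apply, hMQ.eq, mul_apply]
    _ ≤ ∑ x, ρ * M x k := sum_le_sum fun x _ => Nat.mul_le_mul_right _ (hρ j x)
    _ = ρ * ∑ x, M x k := (mul_sum ..).symm

theorem Matrix.sum_col_le_mul_sum_row {M Q : Matrix ι ι ℕ} {ρ : ℕ} (hMQ : Commute M Q)
    (hQ : ∀ j k, 0 < Q j k) (hρ : ∀ j k, Q j k ≤ ρ) (j k : ι) :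
    ∑ x, M x k ≤ ρ * ∑ x, M j x := by
  have hMQT : Commute Mᵀ Qᵀ := by
    rw [commute_iff_eq, ← transpose_mul, ← transpose_mul, hMQ.eq]
  exact sum_row_le_mul_sum_col hMQT (fun j k => hQ k j) (fun j k => hρ k j) k j

theorem Matrix.sum_row_le_sq_mul_sum_row {M Q : Matrix ι ι ℕ} {ρ : ℕ} (hMQ : Commute M Q)
    (hQ : ∀ j k, 0 < Q j k) (hρ : ∀ j k, Q j k ≤ ρ) (j j' : ι) :
    ∑ x, M j x ≤ ρ ^ 2 * ∑ x, M j' x :=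
  calc ∑ x, M j x ≤ ρ * ∑ x, M x j := sum_row_le_mul_sum_col hMQ hQ hρ j j
    _ ≤ ρ * (ρ * ∑ x, M j' x) := Nat.mul_le_mul_left _ (sum_col_le_mul_sum_row hMQ hQ hρ j' j)
    _ = ρ ^ 2 * ∑ x, M j' x := by ring

variable [DecidableEq ι]

theorem Matrix.sum_row_pow_pos {L : Matrix ι ι ℕ} (hL : ∀ j, 0 < ∑ k, L j k) (m : ℕ) (j : ι) :
    0 < ∑ k, (L ^ m) j k := by
  induction m with
  | zero => simp [one_apply]
  | succ m ih =>
    calc 0 < ∑ x, (L ^ m) j x := ih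
      _ ≤ ∑ x, (L ^ m) j x * ∑ k, L x k :=
        sum_le_sum fun x _ => Nat.le_mul_of_pos_right _ (hL x)
      _ = ∑ k, (L ^ (m + 1)) j k := by rw [pow_succ, sum_row_mul]

theorem Matrix.sum_row_pow_add_le {L Q : Matrix ι ι ℕ} {ρ : ℕ} (hLQ : Commute L Q)
    (hQ : ∀ j k, 0 < Q j k) (hρ : ∀ j k, Q j k ≤ ρ) (s t : ℕ) (y : ι) :
    ∑ k, (L ^ (s + t)) y k ≤ ρ ^ 2 * (∑ k, (L ^ s) y k) * ∑ k, (L ^ t) y k :=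
  calc ∑ k, (L ^ (s + t)) y k = ∑ x, (L ^ s) y x * ∑ k, (L ^ t) x k := by
        rw [pow_add, sum_row_mul]
    _ ≤ ∑ x, (L ^ s) y x * (ρ ^ 2 * ∑ k, (L ^ t) y k) :=
        sum_le_sum fun x _ => Nat.mul_le_mul_left _
          (sum_row_le_sq_mul_sum_row (hLQ.pow_left t) hQ hρ x y)
    _ = ρ ^ 2 * (∑ k, (L ^ s) y k) * ∑ k, (L ^ t) y k := by rw [← sum_mul]; ring

theorem Matrix.mem_of_pow_pos_of_closed {L : Matrix ι ι ℕ} {S : Finset ι}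
    (hS : ∀ j ∈ S, ∀ k, 0 < L j k → k ∈ S) {m : ℕ} {j k : ι} (hj : j ∈ S)
    (hjk : 0 < (L ^ m) j k) : k ∈ S := by
  induction m generalizing k with
  | zero =>
    obtain rfl : j = k := by by_contra h; simp [h] at hjk
    exact hj
  | succ m ih =>
    rw [pow_succ, mul_apply] at hjk
    obtain ⟨z, -, hz⟩ := sum_pos_iff.mp hjk
    exact hS z (ih (Nat.pos_of_mul_pos_right hz)) k (Nat.pos_of_mul_pos_left hz)

/-- The number of walks of length `m + n` that start outside `S` and are in `S` at time `m`. -/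
def Matrix.crossingWalks (L : Matrix ι ι ℕ) (S : Finset ι) (m n : ℕ) : ℕ :=
  ∑ j ∈ Sᶜ, ∑ k ∈ S, (L ^ m) j k * ∑ l, (L ^ n) k l

theorem Matrix.sum_compl_col_pow_of_closed {L : Matrix ι ι ℕ} {S : Finset ι}
    (hS : ∀ j ∈ S, ∀ k, 0 < L j k → k ∈ S) (m : ℕ) {x : ι} (hx : x ∉ S) :
    ∑ j ∈ Sᶜ, (L ^ m) j x = ∑ j, (L ^ m) j x := by
  refine sum_subset (subset_univ _) fun j _ hj => ?_
  by_contra h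
  exact hx (mem_of_pow_pos_of_closed hS (by simpa using hj) (Nat.pos_of_ne_zero h))

theorem Matrix.sum_row_pow_succ_of_closed {L : Matrix ι ι ℕ} {S : Finset ι}
    (hS : ∀ j ∈ S, ∀ k, 0 < L j k → k ∈ S) (n : ℕ) {z : ι} (hz : z ∈ S) :
    ∑ k ∈ S, L z k * ∑ l, (L ^ n) k l = ∑ k, (L ^ (n + 1)) z k := by
  rw [pow_succ', sum_row_mul]
  refine sum_subset (subset_univ _) fun k _ hk => ?_
  by_contra h
  exact hk (hS z hz k (Nat.pos_of_mul_pos_right (Nat.pos_of_ne_zero h)))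

theorem Matrix.crossingWalks_succ_ge {L : Matrix ι ι ℕ} {S : Finset ι}
    (hS : ∀ j ∈ S, ∀ k, 0 < L j k → k ∈ S) {x y : ι} (hx : x ∉ S) (hy : y ∈ S) (m n : ℕ) :
    crossingWalks L S m (n + 1) + (∑ j, (L ^ m) j x) * L x y * ∑ l, (L ^ n) y l ≤
      crossingWalks L S (m + 1) n := by
  set f : ι → ℕ := fun z => ∑ k ∈ S, L z k * ∑ l, (L ^ n) k l
  have hexpand : ∀ j, ∑ k ∈ S, (L ^ (m + 1)) j k * ∑ l, (L ^ n) k l = ∑ z, (L ^ m) j z * f z := by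
    intro j
    simp only [f, pow_succ, mul_apply, sum_mul, mul_sum, mul_assoc]
    exact (sum_congr rfl fun _ _ => sum_comm).trans sum_comm
  -- split according to whether the walk is in `S` at time `m`
  have hsplit : crossingWalks L S (m + 1) n =
      ∑ j ∈ Sᶜ, ((∑ z ∈ S, (L ^ m) j z * f z) + ∑ z ∈ Sᶜ, (L ^ m) j z * f z) := by
    simp only [crossingWalks, hexpand, sum_add_sum_compl]
  have hstay : ∑ j ∈ Sᶜ, ∑ z ∈ S, (L ^ m) j z * f z = crossingWalks L S m (n + 1) := by
    refine sum_congr rfl fun j _ => sum_congr rfl fun z hz => ?_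
    simp only [f, sum_row_pow_succ_of_closed hS n hz]
  have hcross : (∑ j, (L ^ m) j x) * L x y * ∑ l, (L ^ n) y l ≤
      ∑ j ∈ Sᶜ, ∑ z ∈ Sᶜ, (L ^ m) j z * f z := by
    rw [← sum_compl_col_pow_of_closed hS m hx, sum_mul, sum_mul]
    refine sum_le_sum fun j _ => ?_
    calc (L ^ m) j x * L x y * ∑ l, (L ^ n) y l ≤ (L ^ m) j x * f x := by
          rw [mul_assoc]
          exact Nat.mul_le_mul_left _ (single_le_sum (f := fun k => L x k * ∑ l, (L ^ n) k l)
            (fun _ _ => Nat.zero_le _) hy)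
      _ ≤ ∑ z ∈ Sᶜ, (L ^ m) j z * f z :=
          single_le_sum (f := fun z => (L ^ m) j z * f z) (fun _ _ => Nat.zero_le _)
            (mem_compl.mpr hx)
  rw [hsplit, sum_add_distrib, hstay]
  exact Nat.add_le_add_left hcross _

theorem Matrix.mul_sum_row_pow_le_crossingWalks {L Q : Matrix ι ι ℕ} {ρ : ℕ}
    (hLQ : Commute L Q) (hQ : ∀ j k, 0 < Q j k) (hρ : ∀ j k, Q j k ≤ ρ) {S : Finset ι}
    (hS : ∀ j ∈ S, ∀ k, 0 < L j k → k ∈ S) {x y : ι} (hx : x ∉ S) (hy : y ∈ S)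
    (hxy : 0 < L x y) (m n : ℕ) :
    m * ∑ l, (L ^ (m + n)) y l ≤ ρ ^ 3 * crossingWalks L S m (n + 1) := by
  induction m generalizing n with
  | zero => simp
  | succ m ih =>
    have hterm : ∑ l, (L ^ (m + (n + 1))) y l ≤
        ρ ^ 3 * ((∑ j, (L ^ m) j x) * L x y * ∑ l, (L ^ (n + 1)) y l) :=
      calc ∑ l, (L ^ (m + (n + 1))) y l
          ≤ ρ ^ 2 * (∑ l, (L ^ m) y l) * ∑ l, (L ^ (n + 1)) y l :=
            sum_row_pow_add_le hLQ hQ hρ m (n + 1) y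
        _ ≤ ρ ^ 2 * (ρ * ∑ j, (L ^ m) j x) * ∑ l, (L ^ (n + 1)) y l := by
            gcongr
            exact sum_row_le_mul_sum_col (hLQ.pow_left m) hQ hρ y x
        _ = ρ ^ 3 * ((∑ j, (L ^ m) j x) * 1 * ∑ l, (L ^ (n + 1)) y l) := by ring
        _ ≤ ρ ^ 3 * ((∑ j, (L ^ m) j x) * L x y * ∑ l, (L ^ (n + 1)) y l) := by
            gcongr
            exact hxy
    calc (m + 1) * ∑ l, (L ^ (m + 1 + n)) y l
        = m * ∑ l, (L ^ (m + (n + 1))) y l + ∑ l, (L ^ (m + (n + 1))) y l := by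
          rw [add_assoc, add_comm 1 n, add_mul, one_mul]
      _ ≤ ρ ^ 3 * crossingWalks L S m (n + 1 + 1) +
            ρ ^ 3 * ((∑ j, (L ^ m) j x) * L x y * ∑ l, (L ^ (n + 1)) y l) :=
          add_le_add (ih (n + 1)) hterm
      _ ≤ ρ ^ 3 * crossingWalks L S (m + 1) (n + 1) := by
          rw [← mul_add]
          exact Nat.mul_le_mul_left _ (crossingWalks_succ_ge hS hx hy m (n + 1))

theorem Matrix.crossingWalks_le {L Q : Matrix ι ι ℕ} {ρ : ℕ} (hLQ : Commute L Q)
    (hQ : ∀ j k, 0 < Q j k) (hρ : ∀ j k, Q j k ≤ ρ) (S : Finset ι) (m n : ℕ) (y : ι) :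
    crossingWalks L S m n ≤ Fintype.card ι * ρ ^ 2 * ∑ l, (L ^ (m + n)) y l :=
  calc crossingWalks L S m n ≤ ∑ j, ∑ k, (L ^ m) j k * ∑ l, (L ^ n) k l :=
        (sum_le_sum_of_subset (subset_univ _)).trans
          (sum_le_sum fun _ _ => sum_le_sum_of_subset (subset_univ _))
    _ = ∑ j, ∑ l, (L ^ (m + n)) j l := by simp only [pow_add, sum_row_mul]
    _ ≤ ∑ _j, ρ ^ 2 * ∑ l, (L ^ (m + n)) y l :=
        sum_le_sum fun j _ => sum_row_le_sq_mul_sum_row (hLQ.pow_left _) hQ hρ j y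
    _ = Fintype.card ι * ρ ^ 2 * ∑ l, (L ^ (m + n)) y l := by
        rw [sum_const, card_univ, smul_eq_mul, mul_assoc]

theorem Matrix.mem_of_pos_of_closed_of_commute {L Q : Matrix ι ι ℕ} (hLQ : Commute L Q)
    (hQ : ∀ j k, 0 < Q j k) {S : Finset ι} (hS : ∀ j ∈ S, ∀ k, 0 < L j k → k ∈ S) {x y : ι}
    (hy : y ∈ S) (hxy : 0 < L x y) : x ∈ S := by
  by_contra hx
  obtain ⟨ρ, hρ⟩ := Finite.bddAbove_range fun p : ι × ι => Q p.1 p.2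
  have hQρ : ∀ j k, Q j k ≤ ρ := fun j k => hρ ⟨(j, k), rfl⟩
  have hrow : ∀ j, 0 < ∑ k, L j k := fun j => by
    have hx_row : 0 < ∑ k, L x k :=
      lt_of_lt_of_le hxy (single_le_sum (fun _ _ => Nat.zero_le _) (mem_univ y))
    exact Nat.pos_of_mul_pos_left
      (lt_of_lt_of_le hx_row (sum_row_le_sq_mul_sum_row hLQ hQ hQρ x j))
  set c := ρ ^ 3 * (Fintype.card ι * ρ ^ 2 * (ρ ^ 2 * ∑ l, L y l))
  set r := ∑ l, (L ^ (c + 1)) y l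
  have hr : 0 < r := sum_row_pow_pos hrow _ _
  have hcr : (c + 1) * r ≤ c * r :=
    calc (c + 1) * r ≤ ρ ^ 3 * crossingWalks L S (c + 1) 1 :=
          mul_sum_row_pow_le_crossingWalks hLQ hQ hQρ hS hx hy hxy (c + 1) 0
      _ ≤ ρ ^ 3 * (Fintype.card ι * ρ ^ 2 * ∑ l, (L ^ (c + 1 + 1)) y l) := by
          gcongr
          exact crossingWalks_le hLQ hQ hQρ S (c + 1) 1 y
      _ ≤ ρ ^ 3 * (Fintype.card ι * ρ ^ 2 * (ρ ^ 2 * r * ∑ l, (L ^ 1) y l)) := by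
          gcongr
          exact sum_row_pow_add_le hLQ hQ hQρ (c + 1) 1 y
      _ = c * r := by simp only [c, pow_one]; ring
  have := Nat.le_of_mul_le_mul_right hcr hr
  omega

theorem Matrix.exists_pow_pos_of_pos_of_commute {L Q : Matrix ι ι ℕ} (hLQ : Commute L Q)
    (hQ : ∀ j k, 0 < Q j k) {x y : ι} (hxy : 0 < L x y) : ∃ n, 0 < (L ^ n) y x := by
  classical
  let S := univ.filter fun k => ∃ n, 0 < (L ^ n) y k
  have hS : ∀ j ∈ S, ∀ k, 0 < L j k → k ∈ S := by
    intro j hj k hjk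
    obtain ⟨n, hn⟩ := (mem_filter.mp hj).2
    refine mem_filter.mpr ⟨mem_univ k, n + 1, ?_⟩
    rw [pow_succ, mul_apply]
    exact lt_of_lt_of_le (Nat.mul_pos hn hjk)
      (single_le_sum (f := fun z => (L ^ n) y z * L z k) (fun _ _ => Nat.zero_le _) (mem_univ j))
  have hy : y ∈ S := mem_filter.mpr ⟨mem_univ y, 0, by simp⟩
  exact (mem_filter.mp (mem_of_pos_of_closed_of_commute hLQ hQ hS hy hxy)).2

theorem Matrix.exists_pow_pos_of_nonneg_of_commute {M Q : Matrix ι ι ℤ} (hM : ∀ j k, 0 ≤ M j k)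
    (hQ : ∀ j k, 0 < Q j k) (hMQ : Commute M Q) {x y : ι} (hxy : 0 < M x y) :
    ∃ n, 0 < (M ^ n) y x := by
  let φ : Matrix ι ι ℕ →+* Matrix ι ι ℤ := (Nat.castRingHom ℤ).mapMatrix
  have hlift : ∀ A : Matrix ι ι ℤ, (∀ j k, 0 ≤ A j k) → φ (A.map Int.toNat) = A :=
    fun A hA => by ext j k; simp [φ, hA j k]
  have hQ' : ∀ j k, 0 ≤ Q j k := fun j k => (hQ j k).le
  have hcomm : Commute (M.map Int.toNat) (Q.map Int.toNat) := by
    refine (commute_iff_eq _ _).mpr (map_injective (Nat.cast_injective (R := ℤ)) ?_)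
    change φ _ = φ _
    rw [map_mul, map_mul, hlift M hM, hlift Q hQ', hMQ.eq]
  obtain ⟨n, hn⟩ := exists_pow_pos_of_pos_of_commute hcomm (by simpa using hQ) (by simpa using hxy)
  refine ⟨n, ?_⟩
  rw [← hlift M hM, ← map_pow]
  simpa [φ] using hn

end WalkCounting

/-- Let `R` be a unital ring, free of finite rank as a `ℤ`-module with basis `b`,
with nonnegative structure constants (a `ℤ₊`-ring), containing `1 = b i₀` in the
basis, and transitive. If the `B`-decomposition of `b i * b istar` contains `1` with
positive coefficient, then some power `(b i)^n` contains `b istar` with positive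
coefficient. -/
theorem zplus_ring_power_contains_dual {R : Type*} [Ring R] {ι : Type*} [Fintype ι]
    (b : Module.Basis ι ℤ R) (i₀ : ι) (hone : b i₀ = 1)
    (hnonneg : ∀ i j k : ι, 0 ≤ b.repr (b i * b j) k)
    (htrans : ∀ i j : ι,
      (∃ k : ι, 0 < b.repr (b i * b k) j) ∧ (∃ l : ι, 0 < b.repr (b l * b i) j))
    (i istar : ι) (h : 0 < b.repr (b i * b istar) i₀) :
    ∃ n : ℕ, 0 < b.repr ((b i) ^ n) istar := by
  classical
  let M := Algebra.leftMulMatrix b (b i)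
  let Q := LinearMap.toMatrix b b (LinearMap.mulRight ℤ (∑ l, b l))
  have hMQ : Commute M Q :=
    (LinearMap.commute_mulLeft_right (b i) (∑ l, b l)).map (LinearMap.toMatrixAlgEquiv b)
  have hQ : ∀ j k, 0 < Q j k := by
    intro k j
    obtain ⟨l, hl⟩ := (htrans j k).1
    simp only [Q, LinearMap.toMatrix_apply, LinearMap.mulRight_apply, mul_sum, map_sum,
      Finsupp.coe_finsetSum, Finset.sum_apply]
    exact sum_pos' (fun l _ => hnonneg j l k) ⟨l, mem_univ l, hl⟩
  obtain ⟨n, hn⟩ := exists_pow_pos_of_nonneg_of_commute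
    (fun k j => (Algebra.leftMulMatrix_eq_repr_mul b (b i) k j).trans_ge (hnonneg i j k)) hQ hMQ
    (x := i₀) (y := istar) ((Algebra.leftMulMatrix_eq_repr_mul b (b i) i₀ istar).trans_gt h)
  refine ⟨n, ?_⟩
  rwa [← map_pow, Algebra.leftMulMatrix_eq_repr_mul, hone, mul_one] at hn
end
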